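/- For every n ≥ 1, if m = n + Δ(J_n(1)), then Δ(J_m(1)) = n or Δ(J_m(1)) = n − 1. -/

import Mathlib

/-- The Jaco out-degree function `f`: `f 0 = 0` and, for `n ≥ 1`,
`f n = n - #{k : 1 ≤ k < n ∧ k + f k ≥ n}` (the out-degree of `v_n` in `J_∞(1)`). -/
def jacoF : ℕ → ℕ
  | 0 => 0
  | n + 1 =>
    (n + 1) - ((Finset.range (n + 1)).attach.filter
      (fun a => 1 ≤ a.1 ∧ n + 1 ≤ a.1 + jacoF a.1)).card
  decreasing_by all_goals exact Finset.mem_range.mp a.2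

/-- The in-degree `d⁻(j) = #{i : 1 ≤ i < j ∧ j ≤ i + f i}` of `v_j` in `J_∞(1)`. -/
def jacoDin (j : ℕ) : ℕ := ((Finset.Ico 1 j).filter (fun i => j ≤ i + jacoF i)).card

/-- The degree `d_n(j) = d⁻(j) + #{k : j < k ≤ n ∧ k ≤ j + f j}` of `v_j` in the
underlying undirected graph of the finite Jaco graph `J_n(1)`. -/
def jacoDeg (n j : ℕ) : ℕ :=
  jacoDin j + ((Finset.Ioc j n).filter (fun k => k ≤ j + jacoF j)).card

/-- The maximum degree `Δ(J_n(1)) = max_{1 ≤ j ≤ n} d_n(j)`. -/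
def jacoDelta (n : ℕ) : ℕ := (Finset.Icc 1 n).sup (jacoDeg n)

/-- The Jaconian set `𝕁(J_n(1)) = {j : 1 ≤ j ≤ n ∧ d_n(j) = Δ(J_n(1))}`. -/
def jacoJ (n : ℕ) : Finset ℕ := (Finset.Icc 1 n).filter (fun j => jacoDeg n j = jacoDelta n)

/-!
Let `D n` count the `j ≥ 1` with `j + f j ≤ n`. The in-neighbours of `v_{n+1}` are exactly the
`j ∈ [1, n]` not counted by `D n`, so `f (n + 1) = D n + 1`. Hence `f` is monotone,
`j ↦ j + f j` is strictly increasing, and `j ≤ D n ↔ j + f j ≤ n`. The degree `d_n(j)` equals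
`min (j + f j) n - f j`, which is `j ≤ D n` when `j + f j ≤ n` and `n - f j ≤ n - f (D n + 1) ≤ D n`
otherwise; it equals `D n` at `j = D n`, so `Δ(J_n(1)) = D n`.

For `m = n + D n`, the vertex `n + 1` has `n + 1 + f (n + 1) = m + 1`, so `D m ≤ n`, while
`n - 1` has `(n - 1) + f (n - 1) = n + D (n - 2) ≤ m`, so `n - 1 ≤ D m`.
-/

open Finset

def jacoD (n : ℕ) : ℕ := #{j ∈ Icc 1 n | j + jacoF j ≤ n}

lemma jacoDin_succ_add_jacoD (n : ℕ) : jacoDin (n + 1) + jacoD n = n := by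
  have := card_filter_add_card_filter_not (s := Icc 1 n) (fun i => n < i + jacoF i)
  simp only [not_lt, Nat.card_Icc, Nat.add_sub_cancel] at this
  exact this

lemma jacoD_le (n : ℕ) : jacoD n ≤ n := by
  have := jacoDin_succ_add_jacoD n
  omega

lemma jacoF_succ (n : ℕ) : jacoF (n + 1) = jacoD n + 1 := by
  have hIn : #{a ∈ (range (n + 1)).attach | 1 ≤ a.1 ∧ n + 1 ≤ a.1 + jacoF a.1}
      = jacoDin (n + 1) := by
    rw [card_filter, sum_attach (range (n + 1))
      (fun a => if 1 ≤ a ∧ n + 1 ≤ a + jacoF a then 1 else 0), ← card_filter, jacoDin]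
    congr 1
    ext i
    simp only [mem_filter, mem_range, mem_Ico]
    omega
  rw [jacoF, hIn]
  have := jacoDin_succ_add_jacoD n
  omega

lemma jacoDin_add_jacoF (j : ℕ) : jacoDin j + jacoF j = j := by
  cases j with
  | zero => simp [jacoDin, jacoF]
  | succ n =>
    rw [jacoF_succ]
    have := jacoDin_succ_add_jacoD n
    omega

lemma jacoD_mono : Monotone jacoD := fun a b hab => by
  refine card_le_card fun j hj => ?_
  simp only [mem_filter, mem_Icc] at hj ⊢
  omega

lemma jacoF_mono : Monotone jacoF := by
  refine monotone_nat_of_le_succ fun n => ?_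
  cases n with
  | zero => simp [jacoF]
  | succ n =>
    rw [jacoF_succ, jacoF_succ]
    exact Nat.succ_le_succ (jacoD_mono n.le_succ)

lemma strictMono_add_jacoF : StrictMono fun j => j + jacoF j :=
  strictMono_id.add_monotone jacoF_mono

lemma le_jacoD_iff {n j : ℕ} : j ≤ jacoD n ↔ j + jacoF j ≤ n := by
  constructor
  · intro hj
    by_contra! hlt
    have hj1 : 1 ≤ j := Nat.pos_of_ne_zero fun h => by simp [h, jacoF] at hlt
    have hsub : {i ∈ Icc 1 n | i + jacoF i ≤ n} ⊆ Ico 1 j := fun i hi => by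
      simp only [mem_filter, mem_Icc, mem_Ico] at hi ⊢
      exact ⟨hi.1.1, strictMono_add_jacoF.lt_iff_lt.mp (by omega)⟩
    have := card_le_card hsub
    rw [Nat.card_Ico, ← jacoD] at this
    omega
  · intro hj
    have hsub : Icc 1 j ⊆ {i ∈ Icc 1 n | i + jacoF i ≤ n} := fun i hi => by
      simp only [mem_filter, mem_Icc] at hi ⊢
      have := strictMono_add_jacoF.monotone hi.2
      exact ⟨⟨hi.1, by omega⟩, by omega⟩
    simpa [jacoD] using card_le_card hsub

lemma jacoDeg_eq {m j : ℕ} (hj : j ≤ m) : jacoDeg m j = min (j + jacoF j) m - jacoF j := by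
  have hOut : {k ∈ Ioc j m | k ≤ j + jacoF j} = Ioc j (min (j + jacoF j) m) := by
    ext k
    simp only [mem_filter, mem_Ioc, le_min_iff]
    omega
  rw [jacoDeg, hOut, Nat.card_Ioc]
  have := jacoDin_add_jacoF j
  omega

lemma jacoDeg_le_jacoD {n j : ℕ} (hj : j ≤ n) : jacoDeg n j ≤ jacoD n := by
  rw [jacoDeg_eq hj]
  by_cases hin : j + jacoF j ≤ n
  · have := le_jacoD_iff.mpr hin
    omega
  · have hjD : jacoD n + 1 ≤ j := by
      by_contra!
      exact hin (le_jacoD_iff.mp (by omega))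
    have hfD := jacoF_mono hjD
    have hout : n < jacoD n + 1 + jacoF (jacoD n + 1) := by
      by_contra! h
      have := le_jacoD_iff.mpr h
      omega
    omega

lemma jacoDelta_eq_jacoD (n : ℕ) : jacoDelta n = jacoD n := by
  refine le_antisymm (Finset.sup_le fun j hj => jacoDeg_le_jacoD (mem_Icc.mp hj).2) ?_
  rcases Nat.eq_zero_or_pos (jacoD n) with h0 | hpos
  · exact h0 ▸ Nat.zero_le _
  · have hD := le_jacoD_iff.mp (le_refl (jacoD n))
    have hdeg : jacoDeg n (jacoD n) = jacoD n := by
      rw [jacoDeg_eq (jacoD_le n)]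
      omega
    exact hdeg ▸ Finset.le_sup (mem_Icc.mpr ⟨hpos, jacoD_le n⟩)

lemma jacoD_add_jacoD_le (n : ℕ) : jacoD (n + jacoD n) ≤ n := by
  by_contra! h
  have := le_jacoD_iff.mp h
  rw [jacoF_succ] at this
  omega

lemma sub_one_le_jacoD_add_jacoD (n : ℕ) : n - 1 ≤ jacoD (n + jacoD n) := by
  match n with
  | 0 | 1 => exact Nat.zero_le _
  | k + 2 =>
    refine le_jacoD_iff.mpr ?_
    rw [show k + 2 - 1 = k + 1 by rfl, jacoF_succ]
    have := jacoD_mono (show k ≤ k + 2 by omega)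
    omega

theorem stmt_11_general (n m : ℕ) (hm : m = n + jacoDelta n) :
    jacoDelta m = n ∨ jacoDelta m = n - 1 := by
  rw [jacoDelta_eq_jacoD] at hm
  rw [jacoDelta_eq_jacoD, hm]
  have := jacoD_add_jacoD_le n
  have := sub_one_le_jacoD_add_jacoD n
  omega

/-- If `m = n + Δ(J_n(1))`, then `Δ(J_m(1)) = n` or `Δ(J_m(1)) = n - 1`. -/
theorem stmt_11 (n m : ℕ) (hn : 1 ≤ n) (hm : m = n + jacoDelta n) :
    jacoDelta m = n ∨ jacoDelta m = n - 1 :=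
  stmt_11_general n m hm
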